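/- Let S be a subset of E(ℚ̄) having property (P), and let f be an endomorphism of E defined over ℚ(S) of degree greater than 1 with f(S) ⊆ S. Then f has only finitely many preperiodic points in S. -/

import Mathlib

open WeierstrassCurve WeierstrassCurve.Affine

open scoped Classical

noncomputable section

variable {K : Type*} [Field K]

def inField {W : WeierstrassCurve.Affine K} (F : Subfield K) : W.Point → Prop
  | .zero => True
  | @Point.some _ _ _ x y _ => x ∈ F ∧ y ∈ F

def HasNorthcott {α : Type*} (ht : α → ℝ) (S : Set α) : Prop :=
  ∀ T : ℝ, 0 < T → {P ∈ S | ht P ≤ T}.Finite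

structure IsogenyLike (W : WeierstrassCurve.Affine K) where
  hom : W.Point →+ W.Point
  deg : ℕ
  deg_pos : 0 < deg
  card_fiber : ∀ Q : W.Point, Nat.card {P : W.Point // hom P = Q} = deg

def coordsOf {W : WeierstrassCurve.Affine K} (S : Set W.Point) : Set K :=
  {c | ∃ x y : K, ∃ h : W.Nonsingular x y, Point.some x y h ∈ S ∧ (c = x ∨ c = y)}

def defField (W : WeierstrassCurve.Affine K) (S : Set W.Point) : Subfield K :=
  Subfield.closure ({W.a₁, W.a₂, W.a₃, W.a₄, W.a₆} ∪ coordsOf S)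

def DefinedOver {W : WeierstrassCurve.Affine K} (f : IsogenyLike W) (F : Subfield K) : Prop :=
  ∀ P : W.Point, inField F P → inField F (f.hom P)

def HasPropP {W : WeierstrassCurve.Affine K} (S : Set W.Point) : Prop :=
  ∀ Γ : Set W.Point, Γ ⊆ S → Γ.Infinite →
    ∀ f : IsogenyLike W, DefinedOver f (defField W S) → f.hom '' Γ = Γ → f.deg = 1

/-!
Only two features of `f` matter: it maps `S` into itself and has finite fibres. It suffices to
find an infinite `T ⊆ S` with `T ⊆ f(T)`, since the union of the forward images of `T` is then
an infinite `Γ ⊆ S` with `f(Γ) = Γ`, and property (P) forces `deg f = 1`. If `S` contains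
infinitely many periodic points, take these. Otherwise the infinitely many preperiodic points
lie above the finitely many periodic ones, so some non-periodic point of `S` has infinitely many
ancestors in `S`; by finiteness of fibres (König) so does one of its preimages, and the set of
such non-periodic points works: a finite `T ⊆ f(T)` consists of periodic points.
-/

open Function Set

section Dynamics

variable {α : Type*} {g : α → α} {S T : Set α}

lemma exists_infinite_of_subset_biUnion {ι : Type*} {I : Set ι} {s : ι → Set α}
    (hI : I.Finite) (hT : T.Infinite) (hTs : T ⊆ ⋃ i ∈ I, s i) : ∃ i ∈ I, (s i).Infinite := by
  by_contra! h
  exact hT ((hI.biUnion h).subset hTs)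

lemma mem_periodicPts_of_finite_of_subset_image (hT : T.Finite) (hTg : T ⊆ g '' T) {x : α}
    (hx : x ∈ T) : x ∈ periodicPts g := by
  have : Finite T := hT
  have : ∀ y : T, ∃ w : T, g w = y := fun y =>
    let ⟨w, hw, hgw⟩ := hTg y.2
    ⟨⟨w, hw⟩, hgw⟩
  choose h hgh using this
  have hgh_iterate : ∀ n y, g^[n] (h^[n] y) = y := by
    intro n
    induction n with
    | zero => simp
    | succ n ih => intro y; rw [iterate_succ_apply' h, iterate_succ_apply g, hgh, ih]
  have h_inj : Injective h := fun y z e => Subtype.ext <| by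
    rw [← hgh y, ← hgh z, e]
  obtain ⟨m, hm, hmx⟩ := h_inj.mem_periodicPts ⟨x, hx⟩
  exact mk_mem_periodicPts hm (by simpa [hmx.eq] using hgh_iterate m ⟨x, hx⟩ : g^[m] x = x)

lemma Set.Nonempty.infinite_of_subset_image (hne : T.Nonempty) (hTg : T ⊆ g '' T)
    (hT : ∀ x ∈ T, x ∉ periodicPts g) : T.Infinite := fun hfin =>
  hT _ hne.some_mem (mem_periodicPts_of_finite_of_subset_image hfin hTg hne.some_mem)

lemma exists_image_eq_of_subset_image (hS : MapsTo g S S) (hTS : T ⊆ S) (hTg : T ⊆ g '' T) :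
    ∃ Γ, T ⊆ Γ ∧ Γ ⊆ S ∧ g '' Γ = Γ := by
  have himage : ∀ n, g '' (g^[n] '' T) = g^[n + 1] '' T := fun n => by
    rw [← image_comp, ← iterate_succ']
  refine ⟨⋃ n, g^[n] '' T, subset_iUnion_of_subset 0 (image_id T).superset,
    iUnion_subset fun n => (image_mono hTS).trans (hS.iterate n).image_subset, ?_⟩
  refine (image_iUnion.trans_le (iUnion_mono' fun n => ⟨n + 1, (himage n).le⟩)).antisymm ?_
  refine iUnion_subset fun n => ?_
  calc g^[n] '' T ⊆ g^[n] '' (g '' T) := image_mono hTg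
    _ = g '' (g^[n] '' T) := by rw [← image_comp, ← iterate_succ, himage]
    _ ⊆ g '' ⋃ n, g^[n] '' T := image_mono (subset_iUnion (fun n => g^[n] '' T) n)

lemma inter_periodicPts_subset_image (hS : MapsTo g S S) :
    S ∩ periodicPts g ⊆ g '' (S ∩ periodicPts g) := by
  rintro x ⟨hxS, hx⟩
  obtain ⟨m, hm, hmx⟩ := mem_periodicPts.mp hx
  refine ⟨g^[m - 1] x, ⟨hS.iterate _ hxS, (bijOn_periodicPts g).mapsTo.iterate _ hx⟩, ?_⟩
  rw [← iterate_succ_apply' g, Nat.succ_eq_add_one, Nat.sub_add_cancel hm, hmx.eq]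

variable (g S) in
def ancestors (x : α) : Set α := {z ∈ S | ∃ n, g^[n] z = x}

lemma exists_apply_eq_of_ancestors_infinite (hS : MapsTo g S S)
    (hfib : ∀ y, (g ⁻¹' {y}).Finite) {x : α} (hx : (ancestors g S x).Infinite) :
    ∃ w ∈ S, g w = x ∧ (ancestors g S w).Infinite := by
  have hcover : ancestors g S x \ {x} ⊆ ⋃ w ∈ g ⁻¹' {x} ∩ S, ancestors g S w := by
    rintro z ⟨⟨hzS, n, rfl⟩, hne⟩
    cases n with
    | zero => exact absurd rfl hne
    | succ n =>
      exact mem_biUnion ⟨(iterate_succ_apply' g n z).symm, hS.iterate n hzS⟩ ⟨hzS, n, rfl⟩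
  obtain ⟨w, ⟨hw, hwS⟩, hwinf⟩ := exists_infinite_of_subset_biUnion
    ((hfib x).subset inter_subset_left) (hx.sdiff (finite_singleton x)) hcover
  exact ⟨w, hwS, hw, hwinf⟩

lemma exists_not_mem_periodicPts_ancestors_infinite (hS : MapsTo g S S)
    (hfib : ∀ y, (g ⁻¹' {y}).Finite) (hper : (S ∩ periodicPts g).Finite)
    (hpre : {x ∈ S | ∃ n, g^[n] x ∈ periodicPts g}.Infinite) :
    ∃ y ∈ S, y ∉ periodicPts g ∧ (ancestors g S y).Infinite := by
  set Y := {y ∈ S | y ∉ periodicPts g ∧ g y ∈ periodicPts g}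
  have hY : Y.Finite := (hper.biUnion fun p _ => hfib p).subset fun y hy =>
    mem_biUnion ⟨hS hy.1, hy.2.2⟩ rfl
  -- the last non-periodic point of the forward orbit of `x` lies in `Y`
  have hcover : {x ∈ S | ∃ n, g^[n] x ∈ periodicPts g} \ (S ∩ periodicPts g) ⊆
      ⋃ y ∈ Y, ancestors g S y := by
    rintro x ⟨⟨hxS, hn⟩, hx⟩
    obtain ⟨k, hk, hk1⟩ := Nat.exists_not_and_succ_of_not_zero_of_exists
      (p := fun k => g^[k] x ∈ periodicPts g) (fun h => hx ⟨hxS, h⟩) hn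
    exact mem_biUnion ⟨hS.iterate k hxS, hk, by rwa [iterate_succ_apply'] at hk1⟩ ⟨hxS, k, rfl⟩
  obtain ⟨y, ⟨hyS, hy, -⟩, hyinf⟩ := exists_infinite_of_subset_biUnion hY (hpre.sdiff hper) hcover
  exact ⟨y, hyS, hy, hyinf⟩

lemma exists_infinite_image_eq_of_preperiodic_infinite (hS : MapsTo g S S)
    (hfib : ∀ y, (g ⁻¹' {y}).Finite)
    (hpre : {x ∈ S | ∃ n, g^[n] x ∈ periodicPts g}.Infinite) :
    ∃ Γ ⊆ S, Γ.Infinite ∧ g '' Γ = Γ := by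
  suffices ∃ T ⊆ S, T.Infinite ∧ T ⊆ g '' T by
    obtain ⟨T, hTS, hTinf, hTg⟩ := this
    obtain ⟨Γ, hTΓ, hΓS, hΓ⟩ := exists_image_eq_of_subset_image hS hTS hTg
    exact ⟨Γ, hΓS, hTinf.mono hTΓ, hΓ⟩
  by_cases hper : (S ∩ periodicPts g).Infinite
  · exact ⟨S ∩ periodicPts g, inter_subset_left, hper, inter_periodicPts_subset_image hS⟩
  · obtain ⟨y, hyS, hy, hyinf⟩ :=
      exists_not_mem_periodicPts_ancestors_infinite hS hfib (not_infinite.mp hper) hpre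
    set T := {x ∈ S | x ∉ periodicPts g ∧ (ancestors g S x).Infinite}
    have hTg : T ⊆ g '' T := by
      rintro x ⟨-, hx, hxinf⟩
      obtain ⟨w, hwS, rfl, hwinf⟩ := exists_apply_eq_of_ancestors_infinite hS hfib hxinf
      exact ⟨w, ⟨hwS, fun hw => hx ((bijOn_periodicPts g).mapsTo hw), hwinf⟩, rfl⟩
    exact ⟨T, sep_subset _ _,
      Set.Nonempty.infinite_of_subset_image ⟨y, hyS, hy, hyinf⟩ hTg fun x hx => hx.2.1, hTg⟩

end Dynamics

lemma IsogenyLike.finite_preimage_singleton {W : WeierstrassCurve.Affine K} (f : IsogenyLike W)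
    (Q : W.Point) : (f.hom ⁻¹' {Q}).Finite :=
  Nat.finite_of_card_ne_zero ((f.card_fiber Q).trans_ne f.deg_pos.ne')

theorem finitely_many_preperiodic_of_propP_general
    (E : WeierstrassCurve.Affine (AlgebraicClosure ℚ))
    (S : Set E.Point) (hS : HasPropP S)
    (f : IsogenyLike E) (hdeg : 1 < f.deg)
    (hdef : DefinedOver f (defField E S))
    (hfS : f.hom '' S ⊆ S) :
    {P ∈ S | ∃ n : ℕ, 0 < n ∧ ∃ m : ℕ, 0 < m ∧
      (⇑f.hom)^[m] ((⇑f.hom)^[n] P) = (⇑f.hom)^[n] P}.Finite := by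
  by_contra hinf
  have hpre : {P ∈ S | ∃ n, (⇑f.hom)^[n] P ∈ periodicPts f.hom}.Infinite := by
    refine (not_finite.mp hinf).mono ?_
    rintro P ⟨hP, n, -, m, hm, hPm⟩
    exact ⟨hP, n, m, hm, hPm⟩
  obtain ⟨Γ, hΓS, hΓinf, hΓ⟩ := exists_infinite_image_eq_of_preperiodic_infinite
    (mapsTo_iff_image_subset.mpr hfS) f.finite_preimage_singleton hpre
  exact hdeg.ne' (hS Γ hΓS hΓinf f hdef hΓ)

/-- Let S ⊆ E(ℚ̄) have property (P), and let f be an endomorphism of E defined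
over ℚ(S) of degree greater than 1 with f(S) ⊆ S. Then f has only finitely many preperiodic
points in S (P is preperiodic if some iterate fⁿ(P), n > 0, is periodic). -/
theorem finitely_many_preperiodic_of_propP
    (E : WeierstrassCurve.Affine (AlgebraicClosure ℚ)) (hΔ : E.Δ ≠ 0)
    (S : Set E.Point) (hS : HasPropP S)
    (f : IsogenyLike E) (hdeg : 1 < f.deg)
    (hdef : DefinedOver f (defField E S))
    (hfS : f.hom '' S ⊆ S) :
    {P ∈ S | ∃ n : ℕ, 0 < n ∧ ∃ m : ℕ, 0 < m ∧
      (⇑f.hom)^[m] ((⇑f.hom)^[n] P) = (⇑f.hom)^[n] P}.Finite :=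
  finitely_many_preperiodic_of_propP_general E S hS f hdeg hdef hfS
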